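/- Let T_m denote the number of game walks of length m, and let t = Σ_{m ≥ 1} T_m z^m be the associated formal power series (over the integers, with constant term 0). Then t satisfies the identity z·t^4 + t^2 − (1+z)·t + z = 0 in the ring of formal power series. -/

import Mathlib

/-- A game walk: a finite sequence of integers each equal to `1` or at most
`-3`, all of whose partial sums are at least `1`, and whose total sum is `1`. -/
def IsGameWalk (D : List ℤ) : Prop :=
  (∀ d ∈ D, d = 1 ∨ d ≤ -3) ∧
  (∀ k, 1 ≤ k → k ≤ D.length → 1 ≤ (D.take k).sum) ∧
  D.sum = 1

/-- `T m` is the number of game walks of length `m`. -/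
noncomputable def T (m : ℕ) : ℕ :=
  Nat.card {D : List ℤ // D.length = m ∧ IsGameWalk D}
/-- The generating function of the numbers of game walks, as a formal power
series over `ℤ` with constant term `0`. -/
noncomputable def t : PowerSeries ℤ :=
  PowerSeries.mk fun m => if m = 0 then 0 else (T m : ℤ)

/-!
Read backwards, a game walk is a walk with steps `1` or `≤ -3` that climbs from `0` to `1` and
reaches positive height only at its last step: a first passage to level `1`. Since the only
upward step is `+1`, a first passage to level `h ≥ 0` factors uniquely into `h` first passages
to level `1`, so its generating function is `t ^ h`. Splitting by the first step,
`t = z + z (t⁴ + t⁵ + ⋯)` and `t² = z t + z (t⁵ + t⁶ + ⋯)`; subtracting gives the equation.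
-/

namespace GameWalk

/-- The walk with steps `R` drawn from `S`, started at height `0`, reaches height `h` at its
last step and not before; in the recursion `h` is the height still to climb. -/
def IsFirstPassage (S : Set ℤ) : ℤ → List ℤ → Prop
  | h, [] => h = 0
  | h, d :: R => d ∈ S ∧ 0 < h ∧ IsFirstPassage S (h - d) R

namespace IsFirstPassage

variable {S : Set ℤ}

@[simp] lemma nil_iff {h : ℤ} : IsFirstPassage S h [] ↔ h = 0 := Iff.rfl

@[simp] lemma cons_iff {h d : ℤ} {R : List ℤ} :
    IsFirstPassage S h (d :: R) ↔ d ∈ S ∧ 0 < h ∧ IsFirstPassage S (h - d) R := Iff.rfl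

lemma zero_iff {R : List ℤ} : IsFirstPassage S 0 R ↔ R = [] := by
  cases R <;> simp

lemma nonneg {h : ℤ} {R : List ℤ} (hR : IsFirstPassage S h R) : 0 ≤ h := by
  cases R with
  | nil => exact (nil_iff.1 hR).ge
  | cons d R => exact (cons_iff.1 hR).2.1.le

lemma iff_take {h : ℤ} {R : List ℤ} :
    IsFirstPassage S h R ↔
      (∀ d ∈ R, d ∈ S) ∧ (∀ j < R.length, (R.take j).sum < h) ∧ R.sum = h := by
  induction R generalizing h with
  | nil => simp [eq_comm]
  | cons d R ih =>
    simp only [cons_iff, ih, List.mem_cons, forall_eq_or_imp, List.length_cons,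
      Nat.forall_lt_succ_left, List.take_zero, List.sum_nil, List.take_succ_cons, List.sum_cons]
    constructor
    · rintro ⟨hd, hh, hmem, hlt, hsum⟩
      exact ⟨⟨hd, hmem⟩, ⟨hh, fun j hj => by linarith [hlt j hj]⟩, by linarith⟩
    · rintro ⟨⟨hd, hmem⟩, ⟨hh, hlt⟩, hsum⟩
      exact ⟨hd, hh, hmem, fun j hj => by linarith [hlt j hj], by linarith⟩

lemma append {a b : ℤ} {B A : List ℤ} (hB : IsFirstPassage S a B)
    (hA : IsFirstPassage S b A) : IsFirstPassage S (a + b) (B ++ A) := by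
  induction B generalizing a with
  | nil => simpa [nil_iff.1 hB] using hA
  | cons d B ih =>
    obtain ⟨hd, ha, hB⟩ := cons_iff.1 hB
    refine cons_iff.2 ⟨hd, by linarith [hA.nonneg], ?_⟩
    simpa [sub_add_eq_add_sub] using ih hB

/-- Steps are at most `1`, so the walk cannot jump over level `a` on its way to `a + b`. -/
lemma exists_append {a b : ℤ} {R : List ℤ} (hS : ∀ d ∈ S, d ≤ 1) (ha : 0 ≤ a) (hb : 0 ≤ b)
    (hR : IsFirstPassage S (a + b) R) :
    ∃ B A, R = B ++ A ∧ IsFirstPassage S a B ∧ IsFirstPassage S b A := by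
  induction R generalizing a with
  | nil =>
    have : a = 0 ∧ b = 0 := by have := nil_iff.1 hR; omega
    exact ⟨[], [], rfl, nil_iff.2 this.1, nil_iff.2 this.2⟩
  | cons d R ih =>
    rcases ha.eq_or_lt with rfl | ha
    · exact ⟨[], d :: R, rfl, nil_iff.2 rfl, by simpa using hR⟩
    obtain ⟨hd, -, hR⟩ := cons_iff.1 hR
    obtain ⟨B, A, rfl, hB, hA⟩ :=
      ih (a := a - d) (by linarith [hS d hd]) (by rwa [sub_add_eq_add_sub])
    exact ⟨d :: B, A, rfl, cons_iff.2 ⟨hd, ha, hB⟩, hA⟩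

lemma append_inj {a : ℤ} {B B' A A' : List ℤ} (hB : IsFirstPassage S a B)
    (hB' : IsFirstPassage S a B') (h : B ++ A = B' ++ A') : B = B' ∧ A = A' := by
  induction B generalizing a B' with
  | nil =>
    obtain rfl := zero_iff.1 (nil_iff.1 hB ▸ hB')
    exact ⟨rfl, h⟩
  | cons d B ih =>
    cases B' with
    | nil => exact absurd (nil_iff.1 hB') (cons_iff.1 hB).2.1.ne'
    | cons d' B' =>
      obtain ⟨rfl, hBA⟩ := List.cons_eq_cons.1 (by simpa only [List.cons_append] using h)
      obtain ⟨rfl, rfl⟩ := ih (cons_iff.1 hB).2.2 (cons_iff.1 hB').2.2 hBA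
      exact ⟨rfl, rfl⟩

lemma le_length (hS : ∀ d ∈ S, d ≤ 1) {h : ℤ} {R : List ℤ} (hR : IsFirstPassage S h R) :
    h ≤ R.length := by
  induction R generalizing h with
  | nil => simp [nil_iff.1 hR]
  | cons d R ih =>
    obtain ⟨hd, -, hR⟩ := cons_iff.1 hR
    have := ih hR
    have := hS d hd
    rw [List.length_cons, Nat.cast_succ]
    linarith

end IsFirstPassage

lemma finite_setOf_isFirstPassage {S : Set ℤ} (hS : ∀ d ∈ S, d ≤ 1) (h : ℤ) (m : ℕ) :
    {R : List ℤ | R.length = m ∧ IsFirstPassage S h R}.Finite := by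
  induction m generalizing h with
  | zero =>
    refine (Set.finite_singleton []).subset ?_
    rintro R ⟨hR, -⟩
    exact List.length_eq_zero_iff.1 hR
  | succ m ih =>
    refine ((Set.finite_Icc (h - m) 1).biUnion fun d _ => (ih (h - d)).image (d :: ·)).subset ?_
    rintro (_ | ⟨d, R⟩) ⟨hlen, hR⟩
    · simp at hlen
    obtain ⟨hd, -, hR⟩ := IsFirstPassage.cons_iff.1 hR
    have hlen : R.length = m := by simpa using hlen
    have := hR.le_length hS
    simp only [Set.mem_iUnion, Set.mem_image, Set.mem_Icc, Set.mem_ofPred_eq, List.cons.injEq]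
    exact ⟨d, ⟨by omega, hS d hd⟩, R, ⟨hlen, hR⟩, rfl, rfl⟩

def gameSteps : Set ℤ := {d | d = 1 ∨ d ≤ -3}

lemma gameSteps_le_one : ∀ d ∈ gameSteps, d ≤ 1 := by
  rintro d (rfl | hd) <;> omega

noncomputable def passages (h : ℤ) (m : ℕ) : Finset (List ℤ) :=
  (finite_setOf_isFirstPassage gameSteps_le_one h m).toFinset

open Finset

variable {h : ℤ} {m : ℕ}

lemma mem_passages {R : List ℤ} :
    R ∈ passages h m ↔ R.length = m ∧ IsFirstPassage gameSteps h R :=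
  Set.Finite.mem_toFinset _

lemma passages_zero_left : passages 0 m = if m = 0 then {[]} else ∅ := by
  ext R
  split_ifs with hm <;> simp only [mem_passages, IsFirstPassage.zero_iff, mem_singleton,
    notMem_empty, iff_false, not_and]
  · exact ⟨fun h => h.2, fun h => ⟨h ▸ hm.symm, h⟩⟩
  · rintro hlen rfl
    exact hm hlen.symm

lemma passages_zero_right (hh : h ≠ 0) : passages h 0 = ∅ := by
  ext R
  simp only [mem_passages, List.length_eq_zero_iff, notMem_empty, iff_false, not_and]
  rintro rfl
  exact hh

lemma cons_mem_passages {d : ℤ} {R : List ℤ} :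
    d :: R ∈ passages h (m + 1) ↔ d ∈ gameSteps ∧ 0 < h ∧ R ∈ passages (h - d) m := by
  simp only [mem_passages, List.length_cons, Nat.add_right_cancel_iff, IsFirstPassage.cons_iff]
  tauto

lemma exists_cons_of_mem_passages {R : List ℤ} (hR : R ∈ passages h (m + 1)) :
    ∃ d R', R = d :: R' := by
  rcases R with _ | ⟨d, R'⟩
  · simp [mem_passages] at hR
  · exact ⟨d, R', rfl⟩

lemma passages_add {a b : ℤ} (ha : 0 ≤ a) (hb : 0 ≤ b) (n : ℕ) :
    passages (a + b) n = (antidiagonal n).biUnion fun p =>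
      (passages a p.1 ×ˢ passages b p.2).image fun q => q.1 ++ q.2 := by
  ext R
  simp only [mem_biUnion, mem_image, mem_product, HasAntidiagonal.mem_antidiagonal, Prod.exists,
    mem_passages]
  constructor
  · rintro ⟨hlen, hR⟩
    obtain ⟨B, A, rfl, hB, hA⟩ := hR.exists_append gameSteps_le_one ha hb
    exact ⟨B.length, A.length, by simpa using hlen, B, A, ⟨⟨rfl, hB⟩, rfl, hA⟩, rfl⟩
  · rintro ⟨i, j, hij, B, A, ⟨⟨hB, hBp⟩, hA, hAp⟩, rfl⟩
    exact ⟨by simp [hB, hA, hij], hBp.append hAp⟩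

lemma card_passages_add {a b : ℤ} (ha : 0 ≤ a) (hb : 0 ≤ b) (n : ℕ) :
    #(passages (a + b) n) = ∑ p ∈ antidiagonal n, #(passages a p.1) * #(passages b p.2) := by
  have append_inj {i i' : ℕ} {B A B' A' : List ℤ} (hB : B ∈ passages a i)
      (hB' : B' ∈ passages a i') (h : B ++ A = B' ++ A') : B = B' ∧ A = A' :=
    (mem_passages.1 hB).2.append_inj (mem_passages.1 hB').2 h
  rw [passages_add ha hb, card_biUnion]
  · refine sum_congr rfl fun p _ => ?_
    rw [card_image_of_injOn, card_product]
    rintro ⟨B, A⟩ hBA ⟨B', A'⟩ hBA' h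
    simp only [coe_product, Set.mem_prod, mem_coe] at hBA hBA'
    exact Prod.ext_iff.2 (append_inj hBA.1 hBA'.1 h)
  · rintro ⟨i, j⟩ hij ⟨i', j'⟩ hij' hne
    simp only [Function.onFun, disjoint_left, mem_image, mem_product, Prod.exists, not_exists,
      not_and]
    rintro R ⟨B, A, ⟨hB, -⟩, rfl⟩ B' A' ⟨hB', -⟩ h
    obtain ⟨rfl, -⟩ := append_inj hB' hB h
    apply hne
    rw [mem_coe, HasAntidiagonal.mem_antidiagonal] at hij hij'
    have : i = i' := (mem_passages.1 hB).1.symm.trans (mem_passages.1 hB').1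
    simp only [Prod.mk.injEq]
    omega

lemma card_filter_headI_eq {d : ℤ} (hd : d ∈ gameSteps) (hh : 0 < h) :
    #((passages h (m + 1)).filter (·.headI = d)) = #(passages (h - d) m) := by
  apply card_nbij' List.tail (List.cons d)
  · intro R hR
    obtain ⟨hmem, rfl⟩ := mem_filter.1 hR
    obtain ⟨d, R, rfl⟩ := exists_cons_of_mem_passages hmem
    exact (cons_mem_passages.1 hmem).2.2
  · intro R hR
    exact mem_filter.2 ⟨cons_mem_passages.2 ⟨hd, hh, hR⟩, rfl⟩
  · intro R hR
    obtain ⟨hmem, rfl⟩ := mem_filter.1 hR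
    obtain ⟨d, R, rfl⟩ := exists_cons_of_mem_passages hmem
    rfl
  · intro R _
    rfl

/-- Lowering the first step by one turns a passage to `h + 1` starting with a step `≤ -3`
into a passage to `h` starting with a step `≤ -4`. -/
lemma card_filter_headI_le_succ (hh : 0 < h) :
    #((passages (h + 1) (m + 1)).filter (·.headI ≤ -3)) =
      #((passages h (m + 1)).filter (·.headI ≤ -4)) := by
  have step {d : ℤ} (hd : d ≤ -3) : d ∈ gameSteps := Or.inr hd
  apply card_nbij' (fun R => (R.headI - 1) :: R.tail) (fun R => (R.headI + 1) :: R.tail)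
  · intro R hR
    obtain ⟨hR, hd⟩ := mem_filter.1 hR
    obtain ⟨d, R, rfl⟩ := exists_cons_of_mem_passages hR
    obtain ⟨-, -, hR⟩ := cons_mem_passages.1 hR
    simp only [List.headI_cons, List.tail_cons, coe_filter, Set.mem_ofPred_eq,
      cons_mem_passages] at hd ⊢
    exact ⟨⟨step (by omega), hh, by rwa [sub_sub_eq_add_sub]⟩, by omega⟩
  · intro R hR
    obtain ⟨hR, hd⟩ := mem_filter.1 hR
    obtain ⟨d, R, rfl⟩ := exists_cons_of_mem_passages hR
    obtain ⟨-, -, hR⟩ := cons_mem_passages.1 hR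
    simp only [List.headI_cons, List.tail_cons, coe_filter, Set.mem_ofPred_eq,
      cons_mem_passages] at hd ⊢
    exact ⟨⟨step (by omega), by omega, by rwa [add_sub_add_right_eq_sub]⟩, by omega⟩
  · intro R hR
    obtain ⟨d, R, rfl⟩ := exists_cons_of_mem_passages (mem_filter.1 hR).1
    simp
  · intro R hR
    obtain ⟨d, R, rfl⟩ := exists_cons_of_mem_passages (mem_filter.1 hR).1
    simp

lemma card_passages_succ (hh : 0 < h) :
    #(passages h (m + 1)) =
      #(passages (h - 1) m) + #((passages h (m + 1)).filter (·.headI ≤ -3)) := by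
  have hdown : (passages h (m + 1)).filter (¬ ·.headI = 1) =
      (passages h (m + 1)).filter (·.headI ≤ -3) := by
    refine filter_congr fun R hR => ?_
    obtain ⟨d, R, rfl⟩ := exists_cons_of_mem_passages hR
    rcases (cons_mem_passages.1 hR).1 with rfl | hd
    · simp
    · exact iff_of_true (by simp only [List.headI_cons]; omega) hd
  rw [← card_filter_headI_eq (Or.inl rfl) hh, ← hdown, card_filter_add_card_filter_not]

lemma card_filter_headI_le_neg_three (hh : 0 < h) :
    #((passages h (m + 1)).filter (·.headI ≤ -3)) =
      #(passages (h + 3) m) + #((passages (h + 1) (m + 1)).filter (·.headI ≤ -3)) := by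
  rw [card_filter_headI_le_succ hh, ← card_filter_add_card_filter_not (p := (·.headI = -3)),
    filter_filter, filter_filter]
  congr 1
  · have := card_filter_headI_eq (m := m) (Or.inr le_rfl) hh
    rw [sub_neg_eq_add] at this
    rw [← this]
    congr 1
    exact filter_congr fun R _ => by omega
  · congr 1
    exact filter_congr fun R _ => by omega

noncomputable def passageSeries (h : ℤ) : PowerSeries ℤ :=
  PowerSeries.mk fun m => (#(passages h m) : ℤ)

/-- Counts the passages to `h` whose first step is `≤ -3`. It equals
`z (t ^ (h + 3) + t ^ (h + 4) + ⋯)`, which keeps the argument free of infinite sums. -/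
noncomputable def downFirstSeries (h : ℤ) : PowerSeries ℤ :=
  PowerSeries.mk fun m => (#((passages h m).filter (·.headI ≤ -3)) : ℤ)

open PowerSeries

lemma passageSeries_zero : passageSeries 0 = 1 := by
  ext m
  simp only [passageSeries, coeff_mk, passages_zero_left, coeff_one]
  split_ifs <;> simp

lemma passageSeries_add {a b : ℤ} (ha : 0 ≤ a) (hb : 0 ≤ b) :
    passageSeries (a + b) = passageSeries a * passageSeries b := by
  ext n
  simp only [passageSeries, coeff_mul, coeff_mk, card_passages_add ha hb, Nat.cast_sum,
    Nat.cast_mul]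

lemma passageSeries_natCast (n : ℕ) : passageSeries n = passageSeries 1 ^ n := by
  induction n with
  | zero => exact passageSeries_zero
  | succ n ih =>
    rw [Nat.cast_succ, add_comm, passageSeries_add zero_le_one n.cast_nonneg, ih, pow_succ']

lemma passageSeries_eq (hh : 0 < h) :
    passageSeries h = X * passageSeries (h - 1) + downFirstSeries h := by
  ext (_ | m)
  · simp [passageSeries, downFirstSeries, passages_zero_right hh.ne']
  · simp [passageSeries, downFirstSeries, coeff_succ_X_mul, card_passages_succ hh]

lemma downFirstSeries_eq (hh : 0 < h) :
    downFirstSeries h = X * passageSeries (h + 3) + downFirstSeries (h + 1) := by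
  ext (_ | m)
  · simp [downFirstSeries, passages_zero_right hh.ne', passages_zero_right (h := h + 1) (by omega)]
  · simp [passageSeries, downFirstSeries, coeff_succ_X_mul, card_filter_headI_le_neg_three hh]

/-- Read backwards, a game walk climbs from `0` to `1`, staying at or below `0` until its last
step. -/
lemma isGameWalk_iff_isFirstPassage_reverse {D : List ℤ} :
    IsGameWalk D ↔ IsFirstPassage gameSteps 1 D.reverse := by
  have take_add_drop (k : ℕ) : (D.take k).sum + (D.drop k).sum = D.sum := by
    rw [← List.sum_append, List.take_append_drop]
  rw [IsFirstPassage.iff_take, IsGameWalk, List.length_reverse, List.sum_reverse]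
  simp only [List.mem_reverse, List.take_reverse, List.sum_reverse]
  refine and_congr Iff.rfl (and_congr_left fun hsum => ⟨fun h j hj => ?_, fun h k hk1 hk2 => ?_⟩)
  · have := h (D.length - j) (by omega) (by omega)
    have := take_add_drop (D.length - j)
    omega
  · have := h (D.length - k) (by omega)
    have := take_add_drop k
    rw [Nat.sub_sub_self hk2] at *
    omega

lemma T_eq_card_passages (m : ℕ) : T m = #(passages 1 m) := by
  rw [T, ← Nat.card_eq_finsetCard]
  refine Nat.card_congr (Equiv.subtypeEquiv (List.reverse_involutive.toPerm _) fun D => ?_)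
  simp [mem_passages, isGameWalk_iff_isFirstPassage_reverse]

lemma t_eq_passageSeries_one : t = passageSeries 1 := by
  ext (_ | m)
  · simp [t, passageSeries, passages_zero_right one_ne_zero]
  · simp [t, passageSeries, T_eq_card_passages]

end GameWalk

open GameWalk PowerSeries in
theorem gameWalk_gf_equation :
    PowerSeries.X * t ^ 4 + t ^ 2 - (1 + PowerSeries.X) * t + PowerSeries.X
      = 0 := by
  have h₁ := passageSeries_eq (h := 1) one_pos
  have h₂ := passageSeries_eq (h := 2) two_pos
  have hdown := downFirstSeries_eq (h := 1) one_pos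
  have hsq := passageSeries_natCast 2
  have hfourth := passageSeries_natCast 4
  norm_num [passageSeries_zero] at h₁ h₂ hdown hsq hfourth
  rw [t_eq_passageSeries_one, ← hsq, ← hfourth]
  linear_combination h₂ - h₁ - hdown
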